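/- arXiv:2008.11661 — 2 statements merged into one kernel-verified Lean document; each statement's English description precedes it below -/
import Mathlib

section
/- If C(x) and D(x) are formal power series satisfying D(x) = 1 + C(x·D(x)²) and D(x) = 1 + x·D(x) + 2x²·D'(x) with C(0) = 0, then 2x·C(x)·C'(x) = C(x)·(1 + C(x)) - x. -/
/-!
Put `u = X * D²`, so that `u = X + O(X²)`. The first equation says `C ∘ u = D - 1`, and the
chain rule then gives `(C' ∘ u) * u' = D'`. Substituting `u` into
`F = 2 X C C' - (C (1 + C) - X)` and multiplying by `u' = D² + 2 X D D'` yields `D³` times the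
second equation, so `F ∘ u = 0`. Since `u` has a compositional inverse, `F = 0`.
-/

open PowerSeries Finset

/-- Composition `f(g(X))` of formal power series (meaningful when `g` has zero
constant term). -/
noncomputable def pcomp (f g : ℚ⟦X⟧) : ℚ⟦X⟧ :=
  PowerSeries.mk fun n => ∑ k ∈ Finset.range (n + 1),
    PowerSeries.coeff k f * PowerSeries.coeff n (g ^ k)

/-- Division of a power series by `X` (dropping the constant term). -/
noncomputable def shiftDiv (f : ℚ⟦X⟧) : ℚ⟦X⟧ :=
  PowerSeries.mk fun n => PowerSeries.coeff (n + 1) f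

namespace PowerSeries

variable {R : Type*} [CommRing R]

theorem coeff_pow_eq_zero_of_lt {g : R⟦X⟧} (hg : constantCoeff g = 0) {k n : ℕ} (hnk : n < k) :
    coeff n (g ^ k) = 0 :=
  X_pow_dvd_iff.mp (pow_dvd_pow_of_dvd (X_dvd_iff.mpr hg) k) n hnk

theorem subst_injective {g : R⟦X⟧} (hg : constantCoeff g = 0) (hg₁ : IsUnit (coeff 1 g)) :
    Function.Injective (subst g : R⟦X⟧ → R⟦X⟧) := by
  have hsubst : HasSubst g := HasSubst.of_constantCoeff_zero' hg
  have hinv : HasSubst (g.substInvOfIsUnit hg₁) := HasSubst.substInvOfIsUnit g hg₁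
  have hleft : ∀ f : R⟦X⟧, subst (g.substInvOfIsUnit hg₁) (subst g f) = f := fun f => by
    rw [subst_comp_subst_apply hsubst hinv, subst_substInvOfIsUnit_right g hg hg₁, X_subst]
  exact Function.LeftInverse.injective hleft

end PowerSeries

theorem pcomp_eq_subst {f g : ℚ⟦X⟧} (hg : constantCoeff g = 0) : pcomp f g = f.subst g := by
  ext n
  rw [pcomp, coeff_mk, coeff_subst' (HasSubst.of_constantCoeff_zero' hg),
    finsum_eq_sum_of_support_subset (s := range (n + 1))]
  · simp only [smul_eq_mul]
  · intro k hk
    simp only [Function.mem_support, smul_eq_mul, coe_range, Set.mem_Iio] at hk ⊢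
    by_contra! hnk
    exact hk (by rw [coeff_pow_eq_zero_of_lt hg (by omega), mul_zero])

theorem connected_chord_ode_general (C D : ℚ⟦X⟧)
    (h1 : D = 1 + pcomp C (X * D ^ 2))
    (h2 : D = 1 + X * D + 2 * X ^ 2 * d⁄dX ℚ D) :
    2 * X * C * d⁄dX ℚ C = C * (1 + C) - X := by
  generalize hu_def : X * D ^ 2 = u at h1
  have hD₀ : constantCoeff D = 1 := by simpa using congrArg constantCoeff h2
  have hu₀ : constantCoeff u = 0 := by simp [← hu_def]
  have hu₁ : coeff 1 u = 1 := by
    rw [← hu_def, coeff_succ_X_mul, coeff_zero_eq_constantCoeff_apply, map_pow, hD₀, one_pow]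
  have hu : HasSubst u := HasSubst.of_constantCoeff_zero' hu₀
  have hC : C.subst u = D - 1 := by
    rw [← pcomp_eq_subst hu₀]
    exact eq_sub_of_add_eq' h1.symm
  have hu' : d⁄dX ℚ u = D ^ 2 + 2 * X * D * d⁄dX ℚ D := by
    rw [← hu_def, Derivation.leibniz, Derivation.leibniz_pow, derivative_X]
    simp only [smul_eq_mul, nsmul_eq_mul]
    ring
  have hC' : (d⁄dX ℚ C).subst u * (D ^ 2 + 2 * X * D * d⁄dX ℚ D) = d⁄dX ℚ D := by
    rw [← hu', ← derivative_subst hu, hC, map_sub, Derivation.map_one_eq_zero, sub_zero]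
  have hu'_ne : D ^ 2 + 2 * X * D * d⁄dX ℚ D ≠ 0 := fun h => by
    simpa [hD₀] using congrArg constantCoeff h
  have hsubst : (2 * X * C * d⁄dX ℚ C - (C * (1 + C) - X)).subst u
      = 2 * u * (D - 1) * (d⁄dX ℚ C).subst u - ((D - 1) * D - u) := by
    simp only [← coe_substAlgHom hu, map_sub, map_mul, map_add, map_one, map_ofNat]
    rw [coe_substAlgHom, subst_X hu, hC]
    ring
  have hF : (2 * X * C * d⁄dX ℚ C - (C * (1 + C) - X)).subst u = 0 := by
    refine (mul_left_inj' hu'_ne).mp ?_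
    rw [hsubst]
    subst hu_def
    linear_combination (2 * X * D ^ 2 * (D - 1)) * hC' - D ^ 3 * h2
  refine sub_eq_zero.mp (subst_injective hu₀ (hu₁ ▸ isUnit_one) ?_)
  simp [hF, ← coe_substAlgHom hu]

/-- If `D = 1 + C(x·D(x)²)` and `D = 1 + x·D + 2x²·D'` with `C(0) = 0`, then
`2x·C·C' = C·(1 + C) - x`. -/
theorem connected_chord_ode (C D : ℚ⟦X⟧)
    (hC0 : PowerSeries.constantCoeff C = 0)
    (h1 : D = 1 + pcomp C (X * D ^ 2))
    (h2 : D = 1 + X * D + 2 * X ^ 2 * d⁄dX ℚ D) :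
    2 * X * C * d⁄dX ℚ C = C * (1 + C) - X :=
  connected_chord_ode_general C D h1 h2
end

section
/- For nonnegative integers n, k_1, k_2, the partial Bell polynomials satisfy B_{n, k_1+k_2}(x_1, x_2, ...) = (k_1!·k_2!/(k_1+k_2)!) · Σ_{α=0}^{n} binomial(n,α)·B_{α,k_1}(x_1,x_2,...)·B_{n-α,k_2}(x_1,x_2,...). -/
open Finset

/- The partial Bell polynomial `B_{n,k}(x₁, x₂, …)`: the sum over all set
partitions of `{1,…,n}` into `k` nonempty blocks of the products of
`x_{block size}` over the blocks. -/
open Classical in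
noncomputable def Bell (x : ℕ → ℚ) (n k : ℕ) : ℚ :=
  ∑ P ∈ Finset.univ.filter (fun P : Finset (Finset (Fin n)) =>
      P.card = k ∧ (∀ p ∈ P, p.Nonempty) ∧
      (∀ p ∈ P, ∀ q ∈ P, p ≠ q → p ∩ q = ∅) ∧ P.sup id = Finset.univ),
    ∏ p ∈ P, x p.card

/-!
Choosing `k₁` of the `k₁ + k₂` blocks of a partition of a finite set `S` is the same as choosing
a subset `T ⊆ S` (the union of the chosen blocks) together with a partition of `T` into `k₁`
blocks and a partition of `S \ T` into `k₂` blocks. Hence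
`C(k₁ + k₂, k₁) · B_{S, k₁+k₂} = ∑_{T ⊆ S} B_{T, k₁} · B_{S \ T, k₂}`.
The Bell sum over a set depends only on its cardinality, so grouping the subsets `T` of
`{1, …, n}` by their size `α` turns the right-hand side into the binomial convolution.
-/

namespace Finset

variable {α β : Type*} [DecidableEq α] [DecidableEq β]

structure IsSetPartition (S : Finset α) (P : Finset (Finset α)) : Prop where
  nonempty : ∀ p ∈ P, p.Nonempty
  pairwiseDisjoint : (P : Set (Finset α)).PairwiseDisjoint id
  sup_eq : P.sup id = S

namespace IsSetPartition

variable {S T U : Finset α} {P Q P₁ P₂ : Finset (Finset α)}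

lemma iff_inter_eq_empty : IsSetPartition S P ↔ (∀ p ∈ P, p.Nonempty) ∧
    (∀ p ∈ P, ∀ q ∈ P, p ≠ q → p ∩ q = ∅) ∧ P.sup id = S := by
  simp only [← disjoint_iff_inter_eq_empty]
  exact ⟨fun ⟨hn, hd, hs⟩ => ⟨hn, fun p hp q hq => hd hp hq, hs⟩,
    fun ⟨hn, hd, hs⟩ => ⟨hn, fun p hp q hq => hd p hp q hq, hs⟩⟩

lemma subset_of_mem (h : IsSetPartition S P) {p : Finset α} (hp : p ∈ P) : p ⊆ S :=
  h.sup_eq ▸ le_sup (f := id) hp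

lemma of_subset (h : IsSetPartition S P) (hQ : Q ⊆ P) : IsSetPartition (Q.sup id) Q :=
  ⟨fun p hp => h.nonempty p (hQ hp), h.pairwiseDisjoint.subset (by simpa using hQ), rfl⟩

lemma disjoint_sup_sdiff (h : IsSetPartition S P) (hQ : Q ⊆ P) :
    Disjoint (Q.sup id) ((P \ Q).sup id) := by
  simp only [Finset.disjoint_sup_left, Finset.disjoint_sup_right]
  intro p hp q hq
  exact h.pairwiseDisjoint (hQ hq) (mem_sdiff.1 hp).1 fun hqp => (mem_sdiff.1 hp).2 (hqp ▸ hq)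

lemma sdiff (h : IsSetPartition S P) (hQ : Q ⊆ P) : IsSetPartition (S \ Q.sup id) (P \ Q) := by
  refine ⟨fun p hp => h.nonempty p (mem_sdiff.1 hp).1,
    h.pairwiseDisjoint.subset (by simp), ?_⟩
  rw [← h.sup_eq, ← union_sdiff_of_subset hQ, sup_union, union_sdiff_of_subset hQ]
  exact ((h.disjoint_sup_sdiff hQ).sup_sdiff_cancel_left).symm

lemma union (h₁ : IsSetPartition T P₁) (h₂ : IsSetPartition U P₂) (hTU : Disjoint T U) :
    IsSetPartition (T ∪ U) (P₁ ∪ P₂) := by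
  refine ⟨fun p hp => (mem_union.1 hp).elim (h₁.nonempty p) (h₂.nonempty p), ?_, by
    rw [sup_union, h₁.sup_eq, h₂.sup_eq, sup_eq_union]⟩
  rw [coe_union]
  exact h₁.pairwiseDisjoint.union h₂.pairwiseDisjoint fun p hp q hq _ =>
    hTU.mono (h₁.subset_of_mem hp) (h₂.subset_of_mem hq)

lemma disjoint (h₁ : IsSetPartition T P₁) (h₂ : IsSetPartition U P₂) (hTU : Disjoint T U) :
    Disjoint P₁ P₂ :=
  disjoint_left.2 fun p hp₁ hp₂ => (h₁.nonempty p hp₁).ne_empty <|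
    disjoint_self.1 <| hTU.mono (h₁.subset_of_mem hp₁) (h₂.subset_of_mem hp₂)

lemma map_iff (f : α ↪ β) :
    IsSetPartition (S.map f) (P.map (mapEmbedding f).toEmbedding) ↔ IsSetPartition S P := by
  have hsup : (P.map (mapEmbedding f).toEmbedding).sup id = (P.sup id).map f := by
    rw [sup_map, apply_sup_eq_sup_comp _ (fun _ _ => map_union _ _) (map_empty f)]; rfl
  have hdisj : (↑(P.map (mapEmbedding f).toEmbedding) : Set (Finset β)).PairwiseDisjoint id ↔
      (P : Set (Finset α)).PairwiseDisjoint id := by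
    rw [coe_map, (mapEmbedding f).toEmbedding.injective.injOn.pairwiseDisjoint_image]
    simp [Set.PairwiseDisjoint, Set.Pairwise, Function.onFun, disjoint_map]
  have hne : (∀ q ∈ P.map (mapEmbedding f).toEmbedding, q.Nonempty) ↔ ∀ p ∈ P, p.Nonempty := by
    simp
  constructor
  · rintro ⟨hn, hd, hs⟩
    exact ⟨hne.1 hn, hdisj.1 hd, map_injective f (hsup ▸ hs)⟩
  · rintro ⟨hn, hd, hs⟩
    exact ⟨hne.2 hn, hdisj.2 hd, hs ▸ hsup⟩

end IsSetPartition

open Classical in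
noncomputable def setPartitions (S : Finset α) (k : ℕ) : Finset (Finset (Finset α)) :=
  S.powerset.powerset.filter fun P => P.card = k ∧ IsSetPartition S P

lemma mem_setPartitions {S : Finset α} {k : ℕ} {P : Finset (Finset α)} :
    P ∈ setPartitions S k ↔ P.card = k ∧ IsSetPartition S P := by
  simp only [setPartitions, mem_filter, mem_powerset, and_iff_right_iff_imp]
  exact fun h p hp => mem_powerset.2 (h.2.subset_of_mem hp)

lemma setPartitions_map (f : α ↪ β) (S : Finset α) (k : ℕ) :
    setPartitions (S.map f) k =
      (setPartitions S k).map (mapEmbedding (mapEmbedding f).toEmbedding).toEmbedding := by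
  ext Q
  constructor
  · intro hQ
    rw [mem_setPartitions] at hQ
    obtain ⟨P, -, rfl⟩ : ∃ P ⊆ S.powerset, Q = P.map (mapEmbedding f).toEmbedding := by
      refine subset_map_iff.1 fun q hq => ?_
      obtain ⟨p, hp, rfl⟩ := subset_map_iff.1 (hQ.2.subset_of_mem hq)
      exact mem_map_of_mem _ (mem_powerset.2 hp)
    refine mem_map_of_mem _ (mem_setPartitions.2 ⟨?_, (IsSetPartition.map_iff f).1 hQ.2⟩)
    simpa using hQ.1
  · simp only [mem_map, mem_setPartitions]
    rintro ⟨P, ⟨hk, hP⟩, rfl⟩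
    exact ⟨by simpa using hk, (IsSetPartition.map_iff f).2 hP⟩

variable {R : Type*} [CommSemiring R]

noncomputable def setBell (x : ℕ → R) (S : Finset α) (k : ℕ) : R :=
  ∑ P ∈ setPartitions S k, ∏ p ∈ P, x p.card

lemma setBell_map (x : ℕ → R) (f : α ↪ β) (S : Finset α) (k : ℕ) :
    setBell x (S.map f) k = setBell x S k := by
  simp [setBell, setPartitions_map, sum_map, prod_map]

theorem choose_mul_setBell_add (x : ℕ → R) (S : Finset α) (k₁ k₂ : ℕ) :
    ((k₁ + k₂).choose k₁ : R) * setBell x S (k₁ + k₂) =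
      ∑ T ∈ S.powerset, setBell x T k₁ * setBell x (S \ T) k₂ := by
  have hlhs : ((k₁ + k₂).choose k₁ : R) * setBell x S (k₁ + k₂) =
      ∑ PQ ∈ (setPartitions S (k₁ + k₂)).sigma fun P => P.powersetCard k₁,
        (∏ p ∈ PQ.2, x p.card) * ∏ p ∈ PQ.1 \ PQ.2, x p.card := by
    rw [setBell, mul_sum, sum_sigma]
    refine sum_congr rfl fun P hP => ?_
    rw [sum_congr rfl fun Q hQ => by rw [mul_comm, prod_sdiff (mem_powersetCard.1 hQ).1],
      sum_const, card_powersetCard, (mem_setPartitions.1 hP).1, nsmul_eq_mul]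
  have hrhs : ∑ T ∈ S.powerset, setBell x T k₁ * setBell x (S \ T) k₂ =
      ∑ TP ∈ S.powerset.sigma fun T => setPartitions T k₁ ×ˢ setPartitions (S \ T) k₂,
        (∏ p ∈ TP.2.1, x p.card) * ∏ p ∈ TP.2.2, x p.card := by
    rw [sum_sigma]
    exact sum_congr rfl fun T _ => by rw [setBell, setBell, sum_mul_sum, sum_product]
  rw [hlhs, hrhs]
  refine sum_nbij' (fun PQ => ⟨PQ.2.sup id, PQ.2, PQ.1 \ PQ.2⟩)
    (fun TP => ⟨TP.2.1 ∪ TP.2.2, TP.2.1⟩) ?_ ?_ ?_ ?_ fun _ _ => rfl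
  · rintro ⟨P, Q⟩ h
    simp only [mem_sigma, mem_powersetCard, mem_setPartitions, mem_powerset, mem_product] at h ⊢
    obtain ⟨⟨hk, hP⟩, hQP, hQk⟩ := h
    refine ⟨hP.sup_eq ▸ sup_mono hQP, ⟨hQk, hP.of_subset hQP⟩, ?_, hP.sdiff hQP⟩
    rw [card_sdiff_of_subset hQP, hk, hQk, Nat.add_sub_cancel_left]
  · rintro ⟨T, P₁, P₂⟩ h
    simp only [mem_sigma, mem_powersetCard, mem_setPartitions, mem_powerset, mem_product] at h ⊢
    obtain ⟨hTS, ⟨hk₁, h₁⟩, hk₂, h₂⟩ := h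
    refine ⟨⟨?_, union_sdiff_of_subset hTS ▸ h₁.union h₂ disjoint_sdiff⟩, subset_union_left, hk₁⟩
    rw [card_union_of_disjoint (h₁.disjoint h₂ disjoint_sdiff), hk₁, hk₂]
  · rintro ⟨P, Q⟩ h
    simp only [union_sdiff_of_subset (mem_powersetCard.1 (mem_sigma.1 h).2).1]
  · rintro ⟨T, P₁, P₂⟩ h
    simp only [mem_sigma, mem_setPartitions, mem_product] at h
    obtain ⟨-, ⟨-, h₁⟩, -, h₂⟩ := h
    simp only [h₁.sup_eq, union_sdiff_cancel_left (h₁.disjoint h₂ disjoint_sdiff)]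

end Finset

lemma bell_eq_setBell_univ (x : ℕ → ℚ) (n k : ℕ) :
    Bell x n k = setBell x (univ : Finset (Fin n)) k := by
  unfold Bell setBell
  refine sum_congr (ext fun P => ?_) fun _ _ => rfl
  simp [mem_setPartitions, IsSetPartition.iff_inter_eq_empty]

lemma setBell_eq_bell {α : Type*} [DecidableEq α] (x : ℕ → ℚ) (S : Finset α) (k : ℕ) :
    setBell x S k = Bell x S.card k := by
  have hS : (univ : Finset (Fin S.card)).map
      (S.equivFin.symm.toEmbedding.trans (Function.Embedding.subtype _)) = S := by
    rw [← map_map, map_univ_equiv, univ_eq_attach, attach_map_val]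
  conv_lhs => rw [← hS]
  rw [setBell_map, bell_eq_setBell_univ]

/-- Cvijović's convolution identity:
`B_{n,k₁+k₂} = (k₁!·k₂!/(k₁+k₂)!) · Σ_{α=0}^n (n choose α)·B_{α,k₁}·B_{n-α,k₂}`. -/
theorem bell_convolution (x : ℕ → ℚ) (n k₁ k₂ : ℕ) :
    Bell x n (k₁ + k₂) =
      ((k₁.factorial * k₂.factorial : ℚ) / (k₁ + k₂).factorial) *
        ∑ α ∈ Finset.range (n + 1),
          (n.choose α : ℚ) * Bell x α k₁ * Bell x (n - α) k₂ := by
  have hsum : ∑ T ∈ (univ : Finset (Fin n)).powerset, setBell x T k₁ * setBell x (univ \ T) k₂ =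
      ∑ α ∈ range (n + 1), (n.choose α : ℚ) * Bell x α k₁ * Bell x (n - α) k₂ := by
    simp_rw [setBell_eq_bell, ← compl_eq_univ_sdiff, card_compl, Fintype.card_fin]
    rw [sum_powerset_apply_card (f := fun a => Bell x a k₁ * Bell x (n - a) k₂), card_univ,
      Fintype.card_fin]
    simp_rw [nsmul_eq_mul, mul_assoc]
  rw [← hsum, ← choose_mul_setBell_add, ← bell_eq_setBell_univ,
    Nat.cast_choose ℚ (Nat.le_add_right k₁ k₂), Nat.add_sub_cancel_left]
  field_simp
end
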